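/- arXiv:2512.10851 — 2 statements merged into one kernel-verified Lean document; each statement's English description precedes it below -/
import Mathlib

section
/- Under the additional assumption that λ_i + λ̄_j ≠ 0 for all i, j ∈ {1,…,n}, the matrix-valued function P_C(t) := Σ_{i=1}^{n} Σ_{j=1}^{n} { ((e^{(λ_i+λ̄_j)t} − 1)/(λ_i + λ̄_j)) · x_i x_j^† / (N'(λ_i) · conj(N'(λ_j))) }_H satisfies P_C(0) = 0 and, for every t ∈ ℝ, P_C is differentiable at t with derivative P_C'(t) = A_C P_C(t) + P_C(t) A_C^T + e_n e_n^T (i.e., P_C solves the differential Lyapunov equation −dP/dt + A_C P + P A_C^T = −e_n e_n^T with zero initial condition). -/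
open Matrix Finset

noncomputable section

/-- `N(s) = s^n + ∑_{k<n} a_k s^k`, the characteristic polynomial as a function. -/
def Npoly (n : ℕ) (a : Fin n → ℝ) : ℂ → ℂ :=
  fun s => s ^ n + ∑ k : Fin n, (a k : ℂ) * s ^ (k : ℕ)

/-- The companion matrix `A_C` (over `ℂ`, with real entries). -/
def Acomp (n : ℕ) (a : Fin n → ℝ) : Matrix (Fin n) (Fin n) ℂ :=
  Matrix.of fun μ ν =>
    if (μ : ℕ) + 1 = n then -(a ν : ℂ)
    else if (ν : ℕ) = (μ : ℕ) + 1 then 1 else 0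

/-- The right eigenvector `x_i`, `(x_i)_μ = λ_i^{μ-1}` (0-based: `λ_i^μ`). -/
def xvec (n : ℕ) (lam : Fin n → ℂ) (i : Fin n) : Fin n → ℂ :=
  fun μ => lam i ^ (μ : ℕ)

/-- The left eigenvector `y_i`, `(y_i)_μ = -∑_{k=μ}^{n} a_k λ_i^{k-μ}` (1-based indices,
with `a_n = 1`). -/
def yvec (n : ℕ) (a : Fin n → ℝ) (lam : Fin n → ℂ) (i : Fin n) : Fin n → ℂ :=
  fun μ => -(lam i ^ (n - 1 - (μ : ℕ)) +
    ∑ k : Fin n, if (μ : ℕ) < (k : ℕ) then (a k : ℂ) * lam i ^ ((k : ℕ) - (μ : ℕ) - 1) else 0)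

/-- The residue matrix `R_i = x_i y_i^T / (-N'(λ_i))`. -/
def Rres (n : ℕ) (a : Fin n → ℝ) (lam : Fin n → ℂ) (i : Fin n) :
    Matrix (Fin n) (Fin n) ℂ :=
  (-(deriv (Npoly n a) (lam i)))⁻¹ • Matrix.vecMulVec (xvec n lam i) (yvec n a lam i)

/-- `J = diag((-1)^1, …, (-1)^n)`. -/
def Jmat (n : ℕ) : Matrix (Fin n) (Fin n) ℂ :=
  Matrix.diagonal fun μ => (-1 : ℂ) ^ ((μ : ℕ) + 1)

/-- Hermitian part `{M}_H = (M + Mᴴ)/2`. -/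
def hermPart {m : Type*} [Fintype m] (M : Matrix m m ℂ) : Matrix m m ℂ :=
  (2 : ℂ)⁻¹ • (M + Mᴴ)

/-- The last standard basis vector `e_n`. -/
def evec (n : ℕ) : Fin n → ℂ := fun μ => if (μ : ℕ) = n - 1 then 1 else 0


attribute [local instance] Matrix.normedAddCommGroup Matrix.normedSpace

/-!
Write `u i = x_i / N'(λ_i)`. Each `u i` is an eigenvector of `A_C` for `λ_i` (the companion
matrix acts on `(1, λ, …, λ^{n-1})` as multiplication by `λ` exactly when `N(λ) = 0`). Since
`N = ∏ j, (s - λ_j)`, `∑ i, u i = e_n` is Lagrange interpolation of the monomials `s^μ`, `μ < n`,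
at the roots: its `μ`-th entry is the coefficient of `s^{n-1}` in `s^μ`. The Hermitian parts of the double sum
pair up to the plain sum `P(t) = ∑ i j (∫₀ᵗ e^{(λ_i + λ̄_j)s} ds) u_i u_jᴴ`, and differentiating
a term gives `e^{wt} u_i u_jᴴ = (λ_i + λ̄_j) (∫₀ᵗ …) u_i u_jᴴ + u_i u_jᴴ`: the first part is the
term's share of `A_C P + P A_Cᴴ`, and the second sums to `e_n e_nᴴ`; `A_Cᴴ = A_Cᵀ` as `A_C` is
real.
-/

open Polynomial

section Interpolation

variable {F : Type*} [Field F]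

theorem sum_inv_eval_derivative_nodal_smul_pow {n : ℕ} {v : Fin n → F}
    (hv : Function.Injective v) :
    ∑ i, ((derivative (Lagrange.nodal univ v)).eval (v i))⁻¹ • (fun μ : Fin n => v i ^ (μ : ℕ))
      = fun μ : Fin n => if (μ : ℕ) = n - 1 then (1 : F) else 0 := by
  funext μ
  have hdeg : ((X : F[X]) ^ (μ : ℕ)).degree < #(univ : Finset (Fin n)) := by
    rw [degree_X_pow, card_univ, Fintype.card_fin]; exact_mod_cast μ.isLt
  have hcoeff := Lagrange.coeff_eq_sum hv.injOn hdeg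
  rw [card_univ, Fintype.card_fin, coeff_X_pow] at hcoeff
  simp only [@eq_comm _ (n - 1)] at hcoeff
  simp only [Finset.sum_apply, Pi.smul_apply, smul_eq_mul, eval_pow, eval_X] at hcoeff ⊢
  rw [hcoeff]
  refine sum_congr rfl fun i _ => ?_
  rw [Lagrange.eval_nodal_derivative_eval_node_eq (mem_univ i), Lagrange.eval_nodal,
    div_eq_inv_mul]

end Interpolation

section CharPoly

variable {n : ℕ} {a : Fin n → ℝ} {lam : Fin n → ℂ}

def npolynomial (n : ℕ) (a : Fin n → ℝ) : ℂ[X] :=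
  X ^ n + ∑ k : Fin n, C (a k : ℂ) * X ^ (k : ℕ)

theorem eval_npolynomial (z : ℂ) : (npolynomial n a).eval z = Npoly n a z := by
  simp [npolynomial, Npoly, eval_finsetSum]

theorem monic_npolynomial : (npolynomial n a).Monic :=
  monic_X_pow_add (degree_sum_fin_lt _)

theorem degree_npolynomial : (npolynomial n a).degree = n := by
  rw [npolynomial, degree_add_eq_left_of_degree_lt] <;> rw [degree_X_pow]
  exact degree_sum_fin_lt _

theorem npolynomial_eq_nodal (hroot : ∀ i, Npoly n a (lam i) = 0)
    (hdist : Function.Injective lam) : npolynomial n a = Lagrange.nodal univ lam := by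
  refine eq_of_degree_sub_lt_of_eval_index_eq univ hdist.injOn ?_ fun i _ => ?_
  · rw [card_univ, Fintype.card_fin]
    have := degree_sub_lt_left (p := npolynomial n a) (q := Lagrange.nodal univ lam)
      (by rw [degree_npolynomial, Lagrange.degree_nodal, card_univ, Fintype.card_fin])
      monic_npolynomial.ne_zero
      (by rw [monic_npolynomial.leadingCoeff, Lagrange.nodal_monic.leadingCoeff])
    rwa [degree_npolynomial] at this
  · rw [eval_npolynomial, hroot, Lagrange.eval_nodal_at_node (mem_univ i)]

theorem deriv_Npoly_eq_eval_derivative_nodal (hroot : ∀ i, Npoly n a (lam i) = 0)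
    (hdist : Function.Injective lam) (z : ℂ) :
    deriv (Npoly n a) z = (derivative (Lagrange.nodal univ lam)).eval z := by
  rw [← npolynomial_eq_nodal hroot hdist, ← Polynomial.deriv]
  congr 1
  funext w
  exact (eval_npolynomial w).symm

theorem Acomp_mulVec_xvec {i : Fin n} (hroot : Npoly n a (lam i) = 0) :
    Acomp n a *ᵥ xvec n lam i = lam i • xvec n lam i := by
  funext μ
  simp only [mulVec, dotProduct, Acomp, xvec, of_apply, Pi.smul_apply, smul_eq_mul]
  by_cases hμ : (μ : ℕ) + 1 = n
  · simp only [if_pos hμ, neg_mul, sum_neg_distrib]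
    rw [← pow_succ', hμ]
    simp only [Npoly] at hroot
    linear_combination -hroot
  · have hsucc : ∀ ν : Fin n, (ν : ℕ) = μ + 1 ↔ ν = ⟨μ + 1, by omega⟩ := fun ν => by
      rw [Fin.ext_iff]
    simp only [if_neg hμ, hsucc, ite_mul, one_mul, zero_mul, sum_ite_eq', mem_univ, if_true]
    rw [pow_succ']

theorem Acomp_conjTranspose : (Acomp n a)ᴴ = (Acomp n a)ᵀ := by
  ext μ ν
  simp only [conjTranspose_apply, transpose_apply, Acomp, of_apply]
  split_ifs <;> simp

theorem star_evec : star (evec n) = evec n := by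
  funext μ
  simp only [Pi.star_apply, evec]
  split_ifs <;> simp

end CharPoly

section Lyapunov

open ComplexConjugate

/-- `t ↦ ∫₀ᵗ e^{w s} ds`; at `w = 0` the division gives the junk value `0` instead of `t`. -/
def expIntegral (w : ℂ) (t : ℝ) : ℂ := (Complex.exp (w * t) - 1) / w

theorem expIntegral_zero_right (w : ℂ) : expIntegral w 0 = 0 := by
  simp [expIntegral]

theorem conj_expIntegral (w : ℂ) (t : ℝ) : conj (expIntegral w t) = expIntegral (conj w) t := by
  simp [expIntegral, ← Complex.exp_conj]

theorem exp_mul_eq_mul_expIntegral_add_one {w : ℂ} (hw : w ≠ 0) (t : ℝ) :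
    Complex.exp (w * t) = w * expIntegral w t + 1 := by
  rw [expIntegral, mul_div_cancel₀ _ hw, sub_add_cancel]

theorem hasDerivAt_expIntegral {w : ℂ} (hw : w ≠ 0) (t : ℝ) :
    HasDerivAt (expIntegral w) (Complex.exp (w * t)) t := by
  have := (((hasDerivAt_id (t : ℂ)).const_mul w).cexp.sub_const 1).div_const w |>.comp_ofReal
  rwa [mul_one, mul_div_cancel_right₀ _ hw] at this

variable {ι m : Type*} [Fintype ι]

def lyapunovSum (lam : ι → ℂ) (u : ι → m → ℂ) (t : ℝ) : Matrix m m ℂ :=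
  ∑ i, ∑ j, expIntegral (lam i + conj (lam j)) t • vecMulVec (u i) (star (u j))

theorem lyapunovSum_zero_right (lam : ι → ℂ) (u : ι → m → ℂ) : lyapunovSum lam u 0 = 0 := by
  simp [lyapunovSum, expIntegral_zero_right]

theorem sum_hermPart_of_conjTranspose_eq [Fintype m] {F : ι → ι → Matrix m m ℂ}
    (hF : ∀ i j, (F i j)ᴴ = F j i) : ∑ i, ∑ j, hermPart (F i j) = ∑ i, ∑ j, F i j := by
  simp only [hermPart, ← smul_sum, sum_add_distrib, hF]
  rw [sum_comm (f := fun i j => F j i), ← two_smul ℂ, smul_smul, inv_mul_cancel₀ two_ne_zero,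
    one_smul]

theorem lyapunovSum_eq_sum_hermPart [Fintype m] (lam : ι → ℂ) (u : ι → m → ℂ) (t : ℝ) :
    lyapunovSum lam u t =
      ∑ i, ∑ j, hermPart (expIntegral (lam i + conj (lam j)) t • vecMulVec (u i) (star (u j))) := by
  rw [sum_hermPart_of_conjTranspose_eq fun i j => ?_, lyapunovSum]
  rw [conjTranspose_smul, conjTranspose_vecMulVec, star_star, Complex.star_def, conj_expIntegral,
    map_add, Complex.conj_conj, add_comm]

theorem sum_vecMulVec_star (u : ι → m → ℂ) :
    ∑ i, ∑ j, vecMulVec (u i) (star (u j)) = vecMulVec (∑ i, u i) (star (∑ i, u i)) := by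
  ext μ ν
  simp [vecMulVec_apply, Matrix.sum_apply, sum_mul_sum]

theorem hasDerivAt_lyapunovSum [Fintype m] {lam : ι → ℂ} {u : ι → m → ℂ} {A : Matrix m m ℂ}
    (hu : ∀ i, A *ᵥ u i = lam i • u i) (hw : ∀ i j, lam i + conj (lam j) ≠ 0) (t : ℝ) :
    HasDerivAt (lyapunovSum lam u)
      (A * lyapunovSum lam u t + lyapunovSum lam u t * Aᴴ +
        vecMulVec (∑ i, u i) (star (∑ i, u i))) t := by
  have hterm : ∀ i j, HasDerivAt
      (fun s => expIntegral (lam i + conj (lam j)) s • vecMulVec (u i) (star (u j)))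
      (Complex.exp ((lam i + conj (lam j)) * t) • vecMulVec (u i) (star (u j))) t :=
    fun i j => (hasDerivAt_expIntegral (hw i j) t).smul_const _
  have hA : ∀ i j, A * vecMulVec (u i) (star (u j)) = lam i • vecMulVec (u i) (star (u j)) :=
    fun i j => by rw [mul_vecMulVec, hu, smul_vecMulVec]
  have hAH : ∀ i j, vecMulVec (u i) (star (u j)) * Aᴴ
      = conj (lam j) • vecMulVec (u i) (star (u j)) :=
    fun i j => by
      rw [vecMulVec_mul, vecMul_conjTranspose, star_star, hu, star_smul, vecMulVec_smul]
      rfl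
  have hderiv : HasDerivAt (lyapunovSum lam u)
      (∑ i, ∑ j, Complex.exp ((lam i + conj (lam j)) * t) • vecMulVec (u i) (star (u j))) t :=
    HasDerivAt.fun_sum fun i _ => HasDerivAt.fun_sum fun j _ => hterm i j
  convert hderiv using 1
  simp only [lyapunovSum, mul_sum, sum_mul, Matrix.mul_smul, Matrix.smul_mul, hA, hAH,
    ← sum_vecMulVec_star, ← sum_add_distrib, exp_mul_eq_mul_expIntegral_add_one (hw _ _)]
  refine sum_congr rfl fun i _ => sum_congr rfl fun j _ => ?_
  module

end Lyapunov

theorem stmt4_general (n : ℕ) (a : Fin n → ℝ) (lam : Fin n → ℂ)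
    (hroot : ∀ i, Npoly n a (lam i) = 0)
    (hdist : Function.Injective lam)
    (hsum : ∀ i j, lam i + (starRingEnd ℂ) (lam j) ≠ 0)
    (P : ℝ → Matrix (Fin n) (Fin n) ℂ)
    (hP : P = fun t : ℝ => ∑ i, ∑ j, hermPart
        (((Complex.exp ((lam i + (starRingEnd ℂ) (lam j)) * (t : ℂ)) - 1) /
            (lam i + (starRingEnd ℂ) (lam j)) /
            (deriv (Npoly n a) (lam i) * (starRingEnd ℂ) (deriv (Npoly n a) (lam j)))) •
          Matrix.vecMulVec (xvec n lam i) (fun μ => (starRingEnd ℂ) (xvec n lam j μ)))) :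
    P 0 = 0 ∧ ∀ t : ℝ,
      HasDerivAt P
        (Acomp n a * P t + P t * (Acomp n a)ᵀ + Matrix.vecMulVec (evec n) (evec n)) t := by
  set u : Fin n → Fin n → ℂ := fun i => (deriv (Npoly n a) (lam i))⁻¹ • xvec n lam i
  have hPu : P = lyapunovSum lam u := by
    funext t
    rw [hP, lyapunovSum_eq_sum_hermPart]
    refine sum_congr rfl fun i _ => sum_congr rfl fun j _ => congrArg hermPart ?_
    simp only [u, star_smul, smul_vecMulVec, vecMulVec_smul, smul_smul, expIntegral]
    rw [Complex.star_def, map_inv₀, ← _root_.mul_inv_rev, ← div_eq_mul_inv]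
    rfl
  have hu : ∀ i, Acomp n a *ᵥ u i = lam i • u i := fun i => by
    rw [mulVec_smul, Acomp_mulVec_xvec (hroot i), smul_comm]
  have hb : ∑ i, u i = evec n := by
    simp only [u, deriv_Npoly_eq_eval_derivative_nodal hroot hdist]
    exact sum_inv_eval_derivative_nodal_smul_pow hdist
  refine ⟨by rw [hPu, lyapunovSum_zero_right], fun t => ?_⟩
  have := hasDerivAt_lyapunovSum hu hsum t
  rwa [hb, star_evec, Acomp_conjTranspose, ← hPu] at this

/-- The pairwise spectral decomposition
`P_C(t) = ∑ i j { ((e^{(λ_i+conj λ_j)t} - 1)/(λ_i + conj λ_j)) x_i x_jᴴ /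
(N'(λ_i) conj (N'(λ_j))) }_H` solves the differential Lyapunov equation with zero initial
condition. -/
theorem stmt4 (n : ℕ) (hn : 0 < n) (a : Fin n → ℝ) (lam : Fin n → ℂ)
    (hroot : ∀ i, Npoly n a (lam i) = 0)
    (hdist : Function.Injective lam)
    (hNp : ∀ i, deriv (Npoly n a) (lam i) ≠ 0)
    (hsum : ∀ i j, lam i + (starRingEnd ℂ) (lam j) ≠ 0)
    (P : ℝ → Matrix (Fin n) (Fin n) ℂ)
    (hP : P = fun t : ℝ => ∑ i, ∑ j, hermPart
        (((Complex.exp ((lam i + (starRingEnd ℂ) (lam j)) * (t : ℂ)) - 1) /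
            (lam i + (starRingEnd ℂ) (lam j)) /
            (deriv (Npoly n a) (lam i) * (starRingEnd ℂ) (deriv (Npoly n a) (lam j)))) •
          Matrix.vecMulVec (xvec n lam i) (fun μ => (starRingEnd ℂ) (xvec n lam j μ)))) :
    P 0 = 0 ∧ ∀ t : ℝ,
      HasDerivAt P
        (Acomp n a * P t + P t * (Acomp n a)ᵀ + Matrix.vecMulVec (evec n) (evec n)) t :=
  stmt4_general n a lam hroot hdist hsum P hP

end
end

section
/- Under the additional assumption that λ_i + λ_j ≠ 0 for all i, j ∈ {1,…,n}, define P^− := Σ_{j=1}^{n} P̂_j^{−C}, the symmetrized components P̃_i^{−C} := { P̂_i^{−C} }_H, and for x_0 ∈ ℝ^n set x_{i0} := R_i x_0. Then the minimum control energy x_0^T P^− x_0 admits the spectral decomposition x_0^T P^− x_0 = Σ_{i=1}^{n} x_0^T P̃_i^{−C} x_0, and each component satisfies x_0^T P̃_i^{−C} x_0 = ½ ( x_{i0}^† P^− x_0 + x_0^† P^− x_{i0} ). -/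
open Matrix Finset

noncomputable section

/-!
Everything is read off the generating function of the left eigenvectors,
`(y_i ⬝ (1, s, …, s^{n-1})) (s - λ_i) = N(λ_i) - N(s)`. It gives the biorthogonality
`y_j ⬝ x_i = -N'(λ_i) δ_{ij}` and `x_k ⬝ J y_m = -N(-λ_k) / (λ_k + λ_m)`, hence
`P⁻ x_m = N(-λ_m) J y_m`. Consequently `P⁻ R_i = P̂_i^{-C}`, and `x_kᵀ P⁻ x_m` is the
Cauchy-like kernel `-N(-λ_k) N(-λ_m) / (λ_k + λ_m)`. The kernel is symmetric, and conjugation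
permutes the `λ_k` (`N` has real coefficients and no roots besides the `λ_k`), so testing against
the invertible Vandermonde matrix of the `x_k` shows that `P⁻` is Hermitian. Then the Hermitian
parts of the `P̂_i^{-C}` add up to `{P⁻}_H = P⁻`, and for real `x₀` the quadratic form of
`{P⁻ R_i}_H` is `½ ((R_i x₀)^† P⁻ x₀ + x₀^† P⁻ R_i x₀)`.
-/

section HermitianPart

variable {m : Type*} [Fintype m]

lemma hermPart_sum {ι : Type*} (s : Finset ι) (M : ι → Matrix m m ℂ) :
    hermPart (∑ i ∈ s, M i) = ∑ i ∈ s, hermPart (M i) := by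
  simp only [hermPart, conjTranspose_sum, ← Finset.smul_sum, Finset.sum_add_distrib]

lemma Matrix.IsHermitian.hermPart_eq {M : Matrix m m ℂ} (hM : M.IsHermitian) :
    hermPart M = M := by
  rw [hermPart, hM.eq, ← two_smul ℂ M, smul_smul, inv_mul_cancel₀ two_ne_zero, one_smul]

lemma dotProduct_hermPart_mul_mulVec {P R : Matrix m m ℂ} (hP : P.IsHermitian)
    {x : m → ℂ} (hx : star x = x) :
    x ⬝ᵥ (hermPart (P * R) *ᵥ x) =
      2⁻¹ * (star (R *ᵥ x) ⬝ᵥ (P *ᵥ x) + star x ⬝ᵥ (P *ᵥ (R *ᵥ x))) := by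
  rw [hermPart, conjTranspose_mul, hP.eq, smul_mulVec, add_mulVec, dotProduct_smul,
    dotProduct_add, star_mulVec, ← dotProduct_mulVec, hx, ← mulVec_mulVec, ← mulVec_mulVec,
    smul_eq_mul, add_comm (x ⬝ᵥ _)]

end HermitianPart

lemma Matrix.eq_of_vandermonde_dotProduct_mulVec {K : Type*} [Field K] {n : ℕ}
    {v : Fin n → K} (hv : Function.Injective v) {A B : Matrix (Fin n) (Fin n) K}
    (h : ∀ k l, vandermonde v k ⬝ᵥ (A *ᵥ vandermonde v l) =
      vandermonde v k ⬝ᵥ (B *ᵥ vandermonde v l)) :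
    A = B := by
  have hV : IsUnit (vandermonde v) :=
    (isUnit_iff_isUnit_det _).2 (det_vandermonde_ne_zero_iff.2 hv).isUnit
  have hsandwich : ∀ M : Matrix (Fin n) (Fin n) K, ∀ k l,
      (vandermonde v * M * (vandermonde v)ᵀ) k l = vandermonde v k ⬝ᵥ (M *ᵥ vandermonde v l) := by
    intro M k l
    rw [dotProduct_mulVec, mul_apply']
    rfl
  have : vandermonde v * A * (vandermonde v)ᵀ = vandermonde v * B * (vandermonde v)ᵀ := by
    ext k l
    rw [hsandwich, hsandwich, h]
  exact hV.mul_left_cancel ((isUnit_transpose _).2 hV |>.mul_right_cancel this)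

namespace ControlEnergy

open ComplexConjugate

variable {n : ℕ} (a : Fin n → ℝ) (lam : Fin n → ℂ)

def powVec (n : ℕ) (s : ℂ) : Fin n → ℂ := fun μ => s ^ (μ : ℕ)

lemma yvec_dotProduct_powVec (i : Fin n) (s : ℂ) :
    yvec n a lam i ⬝ᵥ powVec n s =
      -(∑ μ ∈ range n, s ^ μ * lam i ^ (n - 1 - μ) +
        ∑ k : Fin n, (a k : ℂ) * ∑ μ ∈ range k, s ^ μ * lam i ^ ((k : ℕ) - 1 - μ)) := by
  have hlower : ∀ k : Fin n, ∑ μ : Fin n,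
      (if (μ : ℕ) < k then (a k : ℂ) * lam i ^ ((k : ℕ) - μ - 1) else 0) * s ^ (μ : ℕ) =
      (a k : ℂ) * ∑ μ ∈ range k, s ^ μ * lam i ^ ((k : ℕ) - 1 - μ) := by
    intro k
    have hrange : (range n).filter (· < (k : ℕ)) = range k := by
      ext μ; simp only [mem_filter, mem_range]; omega
    rw [Fin.sum_univ_eq_sum_range
      (fun μ => (if μ < k then (a k : ℂ) * lam i ^ ((k : ℕ) - μ - 1) else 0) * s ^ μ),
      mul_sum]
    simp only [ite_mul, zero_mul]
    rw [← sum_filter, hrange]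
    refine sum_congr rfl fun μ _ => ?_
    rw [Nat.sub_right_comm]
    ring
  simp only [dotProduct, yvec, powVec, neg_mul, add_mul, sum_neg_distrib, sum_add_distrib,
    sum_mul]
  rw [sum_comm, Fin.sum_univ_eq_sum_range (fun μ => lam i ^ (n - 1 - μ) * s ^ μ)]
  simp only [hlower, mul_comm (lam i ^ _)]

lemma yvec_dotProduct_powVec_mul_sub (i : Fin n) (s : ℂ) :
    (yvec n a lam i ⬝ᵥ powVec n s) * (s - lam i) = Npoly n a (lam i) - Npoly n a s := by
  rw [yvec_dotProduct_powVec, neg_mul, add_mul, geom_sum₂_mul, sum_mul]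
  simp only [mul_assoc, geom_sum₂_mul]
  simp only [Npoly, mul_sub, sum_sub_distrib]
  ring

lemma yvec_dotProduct_powVec_self (i : Fin n) :
    yvec n a lam i ⬝ᵥ powVec n (lam i) = -deriv (Npoly n a) (lam i) := by
  have hN : Differentiable ℂ (Npoly n a) := by unfold Npoly; fun_prop
  have hy : Differentiable ℂ fun s => yvec n a lam i ⬝ᵥ powVec n s := by
    simp only [dotProduct, powVec]; fun_prop
  have hprod := (hy (lam i)).hasDerivAt.fun_mul ((hasDerivAt_id' (lam i)).sub_const (lam i))
  simp only [sub_self, mul_zero, zero_add, mul_one,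
    yvec_dotProduct_powVec_mul_sub] at hprod
  exact hprod.unique ((hN (lam i)).hasDerivAt.const_sub _)

lemma yvec_dotProduct_powVec_of_ne {i : Fin n} (hi : Npoly n a (lam i) = 0) {s : ℂ}
    (hs : s ≠ lam i) :
    yvec n a lam i ⬝ᵥ powVec n s = -Npoly n a s / (s - lam i) := by
  rw [eq_div_iff (sub_ne_zero.2 hs), yvec_dotProduct_powVec_mul_sub, hi, zero_sub]

lemma xvec_eq_powVec (i : Fin n) : xvec n lam i = powVec n (lam i) := rfl

variable {a lam}

lemma yvec_dotProduct_xvec (hroot : ∀ i, Npoly n a (lam i) = 0)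
    (hdist : Function.Injective lam) (j i : Fin n) :
    yvec n a lam j ⬝ᵥ xvec n lam i = if j = i then -deriv (Npoly n a) (lam i) else 0 := by
  rw [xvec_eq_powVec]
  split_ifs with hji
  · rw [hji, yvec_dotProduct_powVec_self]
  · rw [yvec_dotProduct_powVec_of_ne a lam (hroot j) (hdist.ne (Ne.symm hji)), hroot,
      neg_zero, zero_div]

lemma xvec_dotProduct_Jmat_mulVec_yvec (hroot : ∀ i, Npoly n a (lam i) = 0)
    (hsum : ∀ i j, lam i + lam j ≠ 0) (k m : Fin n) :
    xvec n lam k ⬝ᵥ (Jmat n *ᵥ yvec n a lam m) = -Npoly n a (-lam k) / (lam k + lam m) := by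
  have hflip : xvec n lam k ⬝ᵥ (Jmat n *ᵥ yvec n a lam m) =
      -(yvec n a lam m ⬝ᵥ powVec n (-lam k)) := by
    simp only [Jmat, mulVec_diagonal, dotProduct, xvec, powVec, ← sum_neg_distrib]
    exact sum_congr rfl fun μ _ => by rw [neg_pow]; ring
  have hne : -lam k ≠ lam m := fun h => hsum k m (by rw [← h, add_neg_cancel])
  rw [hflip, yvec_dotProduct_powVec_of_ne a lam (hroot m) hne, ← neg_add', div_neg, neg_neg]

open Polynomial in
lemma exists_eq_of_Npoly_eq_zero (hroot : ∀ i, Npoly n a (lam i) = 0)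
    (hdist : Function.Injective lam) {z : ℂ} (hz : Npoly n a z = 0) : ∃ j, lam j = z := by
  by_contra! hz'
  set p : ℂ[X] := X ^ n + ∑ k : Fin n, C (a k : ℂ) * X ^ (k : ℕ)
  have hlow : (∑ k : Fin n, C (a k : ℂ) * X ^ (k : ℕ)).degree < (n : WithBot ℕ) :=
    degree_sum_fin_lt _
  have hdeg : p.natDegree = n := by
    rw [natDegree_add_eq_left_of_degree_lt (by rwa [degree_X_pow]), natDegree_X_pow]
  have heval : ∀ s, p.eval s = Npoly n a s := fun s => by
    simp [p, Npoly, eval_finsetSum]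
  have hroots : (insert z (univ.map ⟨lam, hdist⟩)).val ⊆ p.roots := by
    intro w hw
    rw [mem_roots (monic_X_pow_add hlow).ne_zero, IsRoot, heval]
    rw [Finset.mem_val, Finset.mem_insert, Finset.mem_map] at hw
    rcases hw with rfl | ⟨j, -, rfl⟩
    · exact hz
    · exact hroot j
  have hcard := card_le_degree_of_subset_roots hroots
  rw [card_insert_of_notMem (by simpa using hz'), card_map, card_univ, Fintype.card_fin,
    hdeg] at hcard
  omega

variable (a) in
lemma Npoly_conj (z : ℂ) : Npoly n a (conj z) = conj (Npoly n a z) := by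
  simp [Npoly]

lemma exists_eq_conj (hroot : ∀ i, Npoly n a (lam i) = 0) (hdist : Function.Injective lam)
    (k : Fin n) : ∃ j, lam j = conj (lam k) :=
  exists_eq_of_Npoly_eq_zero hroot hdist (by rw [Npoly_conj, hroot, map_zero])

def Phat (n : ℕ) (a : Fin n → ℝ) (lam : Fin n → ℂ) (j : Fin n) : Matrix (Fin n) (Fin n) ℂ :=
  (Npoly n a (-(lam j)) / (-(deriv (Npoly n a) (lam j)))) •
    (Jmat n * vecMulVec (yvec n a lam j) (yvec n a lam j))

def Pminus (n : ℕ) (a : Fin n → ℝ) (lam : Fin n → ℂ) : Matrix (Fin n) (Fin n) ℂ :=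
  ∑ j, Phat n a lam j

variable (a lam) in
lemma Phat_mulVec (j : Fin n) (v : Fin n → ℂ) :
    Phat n a lam j *ᵥ v =
      (Npoly n a (-lam j) / -deriv (Npoly n a) (lam j) * (yvec n a lam j ⬝ᵥ v)) •
        (Jmat n *ᵥ yvec n a lam j) := by
  rw [Phat, mul_vecMulVec, smul_mulVec, vecMulVec_mulVec, op_smul_eq_smul, smul_smul]

lemma Pminus_mulVec_xvec (hroot : ∀ i, Npoly n a (lam i) = 0)
    (hdist : Function.Injective lam) (hNp : ∀ i, deriv (Npoly n a) (lam i) ≠ 0) (m : Fin n) :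
    Pminus n a lam *ᵥ xvec n lam m = Npoly n a (-lam m) • (Jmat n *ᵥ yvec n a lam m) := by
  rw [Pminus, sum_mulVec, sum_eq_single m]
  · rw [Phat_mulVec, yvec_dotProduct_xvec hroot hdist, if_pos rfl,
      div_mul_cancel₀ _ (neg_ne_zero.2 (hNp m))]
  · intro j _ hjm
    rw [Phat_mulVec, yvec_dotProduct_xvec hroot hdist, if_neg hjm, mul_zero, zero_smul]
  · simp

lemma Pminus_mul_Rres (hroot : ∀ i, Npoly n a (lam i) = 0)
    (hdist : Function.Injective lam) (hNp : ∀ i, deriv (Npoly n a) (lam i) ≠ 0) (i : Fin n) :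
    Pminus n a lam * Rres n a lam i = Phat n a lam i := by
  rw [Rres, Matrix.mul_smul, mul_vecMulVec, Pminus_mulVec_xvec hroot hdist hNp, Phat,
    mul_vecMulVec, smul_vecMulVec, smul_smul, inv_mul_eq_div]

lemma xvec_dotProduct_Pminus_mulVec_xvec (hroot : ∀ i, Npoly n a (lam i) = 0)
    (hdist : Function.Injective lam) (hNp : ∀ i, deriv (Npoly n a) (lam i) ≠ 0)
    (hsum : ∀ i j, lam i + lam j ≠ 0) (k m : Fin n) :
    xvec n lam k ⬝ᵥ (Pminus n a lam *ᵥ xvec n lam m) =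
      -(Npoly n a (-lam k) * Npoly n a (-lam m)) / (lam k + lam m) := by
  rw [Pminus_mulVec_xvec hroot hdist hNp, dotProduct_smul,
    xvec_dotProduct_Jmat_mulVec_yvec hroot hsum, smul_eq_mul]
  ring

lemma Pminus_isHermitian (hroot : ∀ i, Npoly n a (lam i) = 0)
    (hdist : Function.Injective lam) (hNp : ∀ i, deriv (Npoly n a) (lam i) ≠ 0)
    (hsum : ∀ i j, lam i + lam j ≠ 0) : (Pminus n a lam).IsHermitian := by
  choose f hf using exists_eq_conj hroot hdist
  have hstar : ∀ k, star (xvec n lam k) = xvec n lam (f k) := fun k =>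
    funext fun μ => by simp [xvec, hf]
  refine eq_of_vandermonde_dotProduct_mulVec hdist fun k m => ?_
  change xvec n lam k ⬝ᵥ ((Pminus n a lam)ᴴ *ᵥ xvec n lam m) =
    xvec n lam k ⬝ᵥ (Pminus n a lam *ᵥ xvec n lam m)
  rw [mulVec_conjTranspose, dotProduct_comm, star_dotProduct, dotProduct_comm,
    ← dotProduct_mulVec, hstar, hstar, xvec_dotProduct_Pminus_mulVec_xvec hroot hdist hNp hsum,
    xvec_dotProduct_Pminus_mulVec_xvec hroot hdist hNp hsum, hf, hf]
  simp only [Complex.star_def, map_div₀, map_neg, map_mul, map_add, ← Npoly_conj,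
    Complex.conj_conj]
  ring

end ControlEnergy

open ControlEnergy

theorem stmt12_general (n : ℕ) (a : Fin n → ℝ) (lam : Fin n → ℂ)
    (hroot : ∀ i, Npoly n a (lam i) = 0)
    (hdist : Function.Injective lam)
    (hNp : ∀ i, deriv (Npoly n a) (lam i) ≠ 0)
    (hsum : ∀ i j, lam i + lam j ≠ 0)
    (Phatinv : Fin n → Matrix (Fin n) (Fin n) ℂ)
    (hPhatinv : Phatinv = fun j => (Npoly n a (-(lam j)) / (-(deriv (Npoly n a) (lam j)))) •
        (Jmat n * Matrix.vecMulVec (yvec n a lam j) (yvec n a lam j)))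
    (Pm : Matrix (Fin n) (Fin n) ℂ) (hPm : Pm = ∑ j, Phatinv j)
    (x0 : Fin n → ℝ) (x0c : Fin n → ℂ) (hx0c : x0c = fun μ => (x0 μ : ℂ))
    (xi0 : Fin n → Fin n → ℂ) (hxi0 : xi0 = fun i => Rres n a lam i *ᵥ x0c) :
    x0c ⬝ᵥ (Pm *ᵥ x0c) = (∑ i, x0c ⬝ᵥ (hermPart (Phatinv i) *ᵥ x0c)) ∧
      ∀ i, x0c ⬝ᵥ (hermPart (Phatinv i) *ᵥ x0c) =
        (2 : ℂ)⁻¹ * ((fun μ => (starRingEnd ℂ) (xi0 i μ)) ⬝ᵥ (Pm *ᵥ x0c) +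
          (fun μ => (starRingEnd ℂ) (x0c μ)) ⬝ᵥ (Pm *ᵥ xi0 i)) := by
  have hPhat : Phatinv = Phat n a lam := hPhatinv
  subst hPhat
  have hPminus : Pm = Pminus n a lam := hPm
  subst hPminus hxi0
  have hP := Pminus_isHermitian hroot hdist hNp hsum
  refine ⟨?_, fun i => ?_⟩
  · rw [← dotProduct_sum, ← sum_mulVec, ← hermPart_sum, ← Pminus, hP.hermPart_eq]
  · have hx : star x0c = x0c := by
      subst hx0c; funext μ; exact Complex.conj_ofReal _
    rw [← Pminus_mul_Rres hroot hdist hNp]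
    exact dotProduct_hermPart_mul_mulVec hP hx

/-- Spectral decomposition of the minimum control energy:
`x_0ᵀ P⁻ x_0 = ∑ i x_0ᵀ P̃_i^{-C} x_0`, and
`x_0ᵀ P̃_i^{-C} x_0 = ½ (x_{i0}ᴴ P⁻ x_0 + x_0ᴴ P⁻ x_{i0})` with `x_{i0} = R_i x_0`. -/
theorem stmt12 (n : ℕ) (hn : 0 < n) (a : Fin n → ℝ) (lam : Fin n → ℂ)
    (hroot : ∀ i, Npoly n a (lam i) = 0)
    (hdist : Function.Injective lam)
    (hNp : ∀ i, deriv (Npoly n a) (lam i) ≠ 0)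
    (hsum : ∀ i j, lam i + lam j ≠ 0)
    (Phatinv : Fin n → Matrix (Fin n) (Fin n) ℂ)
    (hPhatinv : Phatinv = fun j => (Npoly n a (-(lam j)) / (-(deriv (Npoly n a) (lam j)))) •
        (Jmat n * Matrix.vecMulVec (yvec n a lam j) (yvec n a lam j)))
    (Pm : Matrix (Fin n) (Fin n) ℂ) (hPm : Pm = ∑ j, Phatinv j)
    (x0 : Fin n → ℝ) (x0c : Fin n → ℂ) (hx0c : x0c = fun μ => (x0 μ : ℂ))
    (xi0 : Fin n → Fin n → ℂ) (hxi0 : xi0 = fun i => Rres n a lam i *ᵥ x0c) :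
    x0c ⬝ᵥ (Pm *ᵥ x0c) = (∑ i, x0c ⬝ᵥ (hermPart (Phatinv i) *ᵥ x0c)) ∧
      ∀ i, x0c ⬝ᵥ (hermPart (Phatinv i) *ᵥ x0c) =
        (2 : ℂ)⁻¹ * ((fun μ => (starRingEnd ℂ) (xi0 i μ)) ⬝ᵥ (Pm *ᵥ x0c) +
          (fun μ => (starRingEnd ℂ) (x0c μ)) ⬝ᵥ (Pm *ᵥ xi0 i)) :=
  stmt12_general n a lam hroot hdist hNp hsum Phatinv hPhatinv Pm hPm x0 x0c hx0c xi0 hxi0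
end
end
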